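/- Define φ(x,y) = (x² − y²) sin(ln(−ln(x² + y²))) for 0 < x² + y² ≤ 1/4 and φ(0,0) = 0. Then the Laplacian Δφ extends continuously to the origin and the Hessian of φ is bounded on the punctured disk {0 < x² + y² ≤ 1/4}, but φ is not twice differentiable at the origin. -/

import Mathlib

open Filter Topology Metric Set

noncomputable def pd {n : ℕ} (i : Fin n) (f : EuclideanSpace ℝ (Fin n) → ℝ)
    (x : EuclideanSpace ℝ (Fin n)) : ℝ :=
  fderiv ℝ f x (EuclideanSpace.single i 1)

noncomputable def spd {n : ℕ} (i j : Fin n) (f : EuclideanSpace ℝ (Fin n) → ℝ)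
    (x : EuclideanSpace ℝ (Fin n)) : ℝ :=
  pd i (pd j f) x

noncomputable def lap {n : ℕ} (f : EuclideanSpace ℝ (Fin n) → ℝ)
    (x : EuclideanSpace ℝ (Fin n)) : ℝ :=
  ∑ i, spd i i f x

def TwiceDiffAt {n : ℕ} (f : EuclideanSpace ℝ (Fin n) → ℝ)
    (p : EuclideanSpace ℝ (Fin n)) : Prop :=
  (∀ᶠ x in 𝓝 p, DifferentiableAt ℝ f x) ∧
  DifferentiableAt ℝ (fderiv ℝ f) p ∧
  Tendsto (fun x => (f x - f p - fderiv ℝ f p (x - p)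
      - (1/2) * fderiv ℝ (fderiv ℝ f) p (x - p) (x - p)) / ‖x - p‖^2)
    (𝓝[≠] p) (𝓝 0)

open scoped Classical in
noncomputable def phiFun (x : EuclideanSpace ℝ (Fin 2)) : ℝ :=
  if x = 0 then 0
  else ((x 0)^2 - (x 1)^2) * Real.sin (Real.log (-Real.log ((x 0)^2 + (x 1)^2)))

/-!
Write `φ = u · g(‖x‖²)` with `u = x₀² - x₁²` and `g(s) = sin (log (-log s))`. Each derivative of `g`
costs a factor `1 / (s · (-log s))`, so `s g'(s)` and `s² g''(s)` are `O(1 / (-log s))`; as `u` and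
`xᵢ xⱼ` are `O(‖x‖²)`, every second partial derivative of `φ` is bounded, and in the Laplacian the
only `O(1)` term is `Δu · g = 0`, leaving `O(1 / (-log ‖x‖²))`. On the other hand
`φ(√s, 0) / s = g(s)` oscillates between `±1` as `s → 0⁺`, so `φ` has no second-order Taylor
expansion at the origin.
-/

open Real

lemma abs_mul_le_of_abs_le {a b s ε : ℝ} (ha : |a| ≤ s) (hb : |s * b| ≤ ε) : |a * b| ≤ ε := by
  rw [abs_mul, abs_of_nonneg ((abs_nonneg a).trans ha)] at hb
  rw [abs_mul]
  exact (mul_le_mul_of_nonneg_right ha (abs_nonneg b)).trans hb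

section Radial

variable {n : ℕ} {x : EuclideanSpace ℝ (Fin n)}

lemma fderiv_coord (j : Fin n) :
    fderiv ℝ (fun y : EuclideanSpace ℝ (Fin n) => y j) x = EuclideanSpace.proj j :=
  (EuclideanSpace.proj j : EuclideanSpace ℝ (Fin n) →L[ℝ] ℝ).fderiv

lemma pd_congr {f g : EuclideanSpace ℝ (Fin n) → ℝ} (h : f =ᶠ[𝓝 x] g) (i : Fin n) :
    pd i f x = pd i g x := by
  rw [pd, pd, h.fderiv_eq]

lemma pd_add {f g : EuclideanSpace ℝ (Fin n) → ℝ} (hf : DifferentiableAt ℝ f x)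
    (hg : DifferentiableAt ℝ g x) (i : Fin n) :
    pd i (fun y => f y + g y) x = pd i f x + pd i g x := by
  simp [pd, fderiv_fun_add hf hg]

lemma pd_coord_mul {f : EuclideanSpace ℝ (Fin n) → ℝ} (hf : DifferentiableAt ℝ f x) (i j : Fin n) :
    pd i (fun y => y j * f y) x = (if j = i then f x else 0) + x j * pd i f x := by
  rw [pd, fderiv_fun_mul (by fun_prop) hf, fderiv_coord]
  simp [pd, PiLp.single_apply]
  ring

lemma hasFDerivAt_mul_comp_norm_sq {v : EuclideanSpace ℝ (Fin n) → ℝ}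
    {v' : EuclideanSpace ℝ (Fin n) →L[ℝ] ℝ} {k : ℝ → ℝ} {k₁ : ℝ} (hv : HasFDerivAt v v' x)
    (hk : HasDerivAt k k₁ (‖x‖ ^ 2)) :
    HasFDerivAt (fun y => v y * k (‖y‖ ^ 2))
      (v x • (k₁ • (2 • innerSL ℝ x)) + k (‖x‖ ^ 2) • v') x :=
  hv.mul (hk.comp_hasFDerivAt x (hasStrictFDerivAt_norm_sq x).hasFDerivAt)

lemma pd_mul_comp_norm_sq {v : EuclideanSpace ℝ (Fin n) → ℝ} {k : ℝ → ℝ} {k₁ : ℝ}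
    (hv : DifferentiableAt ℝ v x) (hk : HasDerivAt k k₁ (‖x‖ ^ 2)) (i : Fin n) :
    pd i (fun y => v y * k (‖y‖ ^ 2)) x = pd i v x * k (‖x‖ ^ 2) + v x * k₁ * (2 * x i) := by
  rw [pd, (hasFDerivAt_mul_comp_norm_sq hv.hasFDerivAt hk).fderiv]
  simp [pd, EuclideanSpace.inner_single_right]
  ring

lemma differentiableAt_mul_comp_norm_sq {v : EuclideanSpace ℝ (Fin n) → ℝ} {k : ℝ → ℝ} {k₁ : ℝ}
    (hv : DifferentiableAt ℝ v x) (hk : HasDerivAt k k₁ (‖x‖ ^ 2)) :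
    DifferentiableAt ℝ (fun y => v y * k (‖y‖ ^ 2)) x :=
  (hasFDerivAt_mul_comp_norm_sq hv.hasFDerivAt hk).differentiableAt

lemma spd_mul_comp_norm_sq {u : EuclideanSpace ℝ (Fin n) → ℝ} {k k' : ℝ → ℝ} {k'' : ℝ}
    (hu : ∀ᶠ y in 𝓝 x, DifferentiableAt ℝ u y) (i j : Fin n)
    (hu' : DifferentiableAt ℝ (pd j u) x)
    (hk : ∀ᶠ y in 𝓝 x, HasDerivAt k (k' (‖y‖ ^ 2)) (‖y‖ ^ 2))
    (hk' : HasDerivAt k' k'' (‖x‖ ^ 2)) :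
    spd i j (fun y => u y * k (‖y‖ ^ 2)) x =
      spd i j u x * k (‖x‖ ^ 2) + 2 * (x i * pd j u x + x j * pd i u x) * k' (‖x‖ ^ 2)
        + (if j = i then 2 * u x * k' (‖x‖ ^ 2) else 0) + 4 * x i * x j * u x * k'' := by
  have hpd : pd j (fun y => u y * k (‖y‖ ^ 2)) =ᶠ[𝓝 x]
      fun y => pd j u y * k (‖y‖ ^ 2) + y j * u y * (2 * k' (‖y‖ ^ 2)) := by
    filter_upwards [hu, hk] with y huy hky
    rw [pd_mul_comp_norm_sq huy hky]
    ring
  have hkx := hk.self_of_nhds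
  have hju : DifferentiableAt ℝ (fun y => y j * u y) x := by
    have := hu.self_of_nhds
    fun_prop
  have hk'2 : HasDerivAt (fun s => 2 * k' s) (2 * k'') (‖x‖ ^ 2) := hk'.const_mul 2
  unfold spd
  rw [pd_congr hpd, pd_add (differentiableAt_mul_comp_norm_sq hu' hkx)
    (differentiableAt_mul_comp_norm_sq hju hk'2), pd_mul_comp_norm_sq hu' hkx,
    pd_mul_comp_norm_sq hju hk'2, pd_coord_mul hu.self_of_nhds]
  split_ifs <;> ring

lemma abs_coord_mul_coord_le (y : EuclideanSpace ℝ (Fin n)) (i j : Fin n) :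
    |y i * y j| ≤ ‖y‖ ^ 2 := by
  rw [abs_mul, sq]
  exact mul_le_mul (PiLp.norm_apply_le y i) (PiLp.norm_apply_le y j) (abs_nonneg _)
    (norm_nonneg _)

end Radial

noncomputable def osc (s : ℝ) : ℝ := sin (log (-log s))

noncomputable def osc' (s : ℝ) : ℝ := -cos (log (-log s)) / (s * -log s)

noncomputable def osc'' (s : ℝ) : ℝ :=
  (cos (log (-log s)) * (-log s - 1) - sin (log (-log s))) / (s * -log s) ^ 2

section Profile

variable {s : ℝ}

lemma hasDerivAt_neg_log (hs : 0 < s) : HasDerivAt (fun x => -log x) (-s⁻¹) s :=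
  (hasDerivAt_log hs.ne').neg

lemma hasDerivAt_osc (hs : 0 < s) (hs1 : s < 1) : HasDerivAt osc (osc' s) s := by
  have ht : 0 < -log s := neg_pos.2 (log_neg hs hs1)
  refine ((hasDerivAt_neg_log hs).log ht.ne').sin.congr_deriv ?_
  rw [osc']
  field_simp

lemma hasDerivAt_osc' (hs : 0 < s) (hs1 : s < 1) : HasDerivAt osc' (osc'' s) s := by
  have ht : 0 < -log s := neg_pos.2 (log_neg hs hs1)
  have hlog := hasDerivAt_neg_log hs
  refine (((hlog.log ht.ne').cos.neg).div ((hasDerivAt_id s).mul hlog)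
    (mul_pos hs ht).ne').congr_deriv ?_
  simp only [osc'', Pi.mul_apply, Pi.neg_apply, id_eq]
  have := (log_neg hs hs1).ne
  field_simp
  ring

lemma abs_osc_le (s : ℝ) : |osc s| ≤ 1 := abs_sin_le_one _

lemma abs_mul_osc'_le (hs : 0 < s) (ht : 1 ≤ -log s) : |s * osc' s| ≤ (-log s)⁻¹ := by
  have : s * osc' s = -cos (log (-log s)) / -log s := by
    rw [osc']; field_simp
  rw [this, abs_div, abs_neg, abs_of_pos (by linarith : 0 < -log s), inv_eq_one_div]
  exact div_le_div_of_nonneg_right (abs_cos_le_one _) (by linarith)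

lemma abs_sq_mul_osc''_le (hs : 0 < s) (ht : 1 ≤ -log s) :
    |s ^ 2 * osc'' s| ≤ (-log s)⁻¹ := by
  set t := -log s
  have hnum : |cos (log t) * (t - 1) - sin (log t)| ≤ t := by
    calc _ ≤ |cos (log t)| * (t - 1) + |sin (log t)| := by
          grw [abs_sub, abs_mul, abs_of_nonneg (by linarith : 0 ≤ t - 1)]
      _ ≤ 1 * (t - 1) + 1 := by
          gcongr
          · exact abs_cos_le_one _
          · exact abs_sin_le_one _
      _ = t := by ring
  rw [osc'', abs_mul, abs_div, abs_of_pos (by positivity : 0 < s ^ 2),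
    abs_of_pos (by positivity : 0 < (s * t) ^ 2)]
  calc s ^ 2 * (|_| / (s * t) ^ 2) ≤ s ^ 2 * (t / (s * t) ^ 2) := by gcongr
    _ = t⁻¹ := by field_simp

lemma osc_exp_neg_exp (θ : ℝ) : osc (exp (-exp θ)) = sin θ := by
  simp [osc]

lemma not_tendsto_osc (L : ℝ) : ¬ Tendsto osc (𝓝[>] 0) (𝓝 L) := by
  intro h
  have hseq : ∀ θ : ℝ, Tendsto (fun k : ℕ => exp (-exp (θ + k * (2 * π)))) atTop (𝓝[>] 0) := by
    intro θ
    refine tendsto_nhdsWithin_iff.2 ⟨?_, Eventually.of_forall fun _ => exp_pos _⟩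
    refine tendsto_exp_atBot.comp (tendsto_neg_atTop_atBot.comp (tendsto_exp_atTop.comp ?_))
    exact tendsto_atTop_add_const_left _ _
      (tendsto_natCast_atTop_atTop.atTop_mul_const (by positivity))
  have hlim : ∀ θ : ℝ, L = sin θ := fun θ =>
    tendsto_nhds_unique (h.comp (hseq θ)) (by
      simp only [Function.comp_def, osc_exp_neg_exp, sin_add_nat_mul_two_pi]
      exact tendsto_const_nhds)
  linarith [hlim (π / 2), hlim (-(π / 2)), sin_pi_div_two, sin_neg (π / 2)]

lemma lt_one_of_one_le_neg_log (hs : 0 < s) (ht : 1 ≤ -log s) : s < 1 :=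
  (log_neg_iff hs).1 (by linarith)

lemma one_le_neg_log_of_le_quarter (hs : 0 < s) (h : s ≤ 1 / 4) : 1 ≤ -log s := by
  have h4 : 1 ≤ log 4 := (le_log_iff_exp_le (by norm_num)).2 (exp_one_lt_d9.le.trans (by norm_num))
  have := log_le_log hs h
  rw [one_div, log_inv] at this
  linarith

end Profile

noncomputable def saddle (y : EuclideanSpace ℝ (Fin 2)) : ℝ := y 0 ^ 2 - y 1 ^ 2

def saddleSign : Fin 2 → ℝ := ![1, -1]

lemma abs_saddleSign (i : Fin 2) : |saddleSign i| = 1 := by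
  fin_cases i <;> simp [saddleSign]

lemma pd_saddle (j : Fin 2) (y : EuclideanSpace ℝ (Fin 2)) :
    pd j saddle y = 2 * saddleSign j * y j := by
  unfold pd saddle
  fin_cases j <;>
    simp (disch := fun_prop) [saddleSign, fderiv_fun_sub, fderiv_fun_pow, fderiv_coord]

lemma spd_saddle (i j : Fin 2) (y : EuclideanSpace ℝ (Fin 2)) :
    spd i j saddle y = if j = i then 2 * saddleSign j else 0 := by
  have : pd j saddle = fun y => 2 * saddleSign j * y j := funext (pd_saddle j)
  simp (disch := fun_prop) [spd, this, pd, fderiv_const_mul, fderiv_coord, PiLp.single_apply]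

lemma norm_sq_eq_coord (y : EuclideanSpace ℝ (Fin 2)) : ‖y‖ ^ 2 = y 0 ^ 2 + y 1 ^ 2 := by
  simp [EuclideanSpace.norm_sq_eq, Fin.sum_univ_two]

lemma abs_saddle_le (y : EuclideanSpace ℝ (Fin 2)) : |saddle y| ≤ ‖y‖ ^ 2 := by
  rw [norm_sq_eq_coord, saddle, abs_le]
  constructor <;> nlinarith [sq_nonneg (y 0), sq_nonneg (y 1)]

lemma phiFun_eq : phiFun = fun y => saddle y * osc (‖y‖ ^ 2) := by
  funext y
  by_cases hy : y = 0
  · simp [phiFun, hy, saddle]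
  · simp [phiFun, hy, saddle, osc, norm_sq_eq_coord]

section Hessian

variable {x : EuclideanSpace ℝ (Fin 2)}

lemma spd_phiFun (hx : x ≠ 0) (hx1 : ‖x‖ ^ 2 < 1) (i j : Fin 2) :
    spd i j phiFun x =
      (if j = i then 2 * (saddleSign j * osc (‖x‖ ^ 2) + saddle x * osc' (‖x‖ ^ 2)) else 0)
        + 4 * x i * x j * ((saddleSign i + saddleSign j) * osc' (‖x‖ ^ 2)
          + saddle x * osc'' (‖x‖ ^ 2)) := by
  have hs : 0 < ‖x‖ ^ 2 := pow_pos (norm_pos_iff.2 hx) 2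
  have hnear : ∀ᶠ y in 𝓝 x, ‖y‖ ^ 2 ∈ Ioo 0 1 :=
    (continuous_norm.pow 2).continuousAt.eventually (isOpen_Ioo.mem_nhds ⟨hs, hx1⟩)
  have hsaddle : Differentiable ℝ saddle := by unfold saddle; fun_prop
  have hpd_saddle : pd j saddle = fun y => 2 * saddleSign j * y j := funext (pd_saddle j)
  rw [phiFun_eq, spd_mul_comp_norm_sq (Eventually.of_forall hsaddle) i j
    (by rw [hpd_saddle]; fun_prop) (hnear.mono fun y hy => hasDerivAt_osc hy.1 hy.2)
    (hasDerivAt_osc' hs hx1), spd_saddle, pd_saddle, pd_saddle]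
  split_ifs <;> ring

lemma abs_spd_phiFun_le (hx : x ≠ 0) (ht : 1 ≤ -log (‖x‖ ^ 2)) (i j : Fin 2) :
    |spd i j phiFun x| ≤ 16 := by
  have hs : 0 < ‖x‖ ^ 2 := pow_pos (norm_pos_iff.2 hx) 2
  rw [spd_phiFun hx (lt_one_of_one_le_neg_log hs ht)]
  set s := ‖x‖ ^ 2
  have hε : (-log s)⁻¹ ≤ 1 := inv_le_one_of_one_le₀ ht
  have h1 : |saddle x * osc' s| ≤ 1 :=
    (abs_mul_le_of_abs_le (abs_saddle_le x) (abs_mul_osc'_le hs ht)).trans hε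
  have h2 : |x i * x j * osc' s| ≤ 1 :=
    (abs_mul_le_of_abs_le (abs_coord_mul_coord_le x i j) (abs_mul_osc'_le hs ht)).trans hε
  have h3 : |x i * x j * saddle x * osc'' s| ≤ 1 := by
    refine (abs_mul_le_of_abs_le ?_ (abs_sq_mul_osc''_le hs ht)).trans hε
    rw [abs_mul, sq]
    exact mul_le_mul (abs_coord_mul_coord_le x i j) (abs_saddle_le x) (abs_nonneg _) hs.le
  have hdiag : |(if j = i then 2 * (saddleSign j * osc s + saddle x * osc' s) else 0)| ≤ 4 := by
    split_ifs
    · rw [abs_mul, abs_two]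
      grw [abs_add_le, abs_mul, abs_saddleSign, abs_osc_le, h1]
      norm_num
    · norm_num
  have hoff : |(saddleSign i + saddleSign j) * (x i * x j * osc' s)| ≤ 2 := by
    rw [abs_mul]
    grw [abs_add_le, abs_saddleSign, abs_saddleSign, h2]
    norm_num
  calc _ = |(if j = i then 2 * (saddleSign j * osc s + saddle x * osc' s) else 0)
          + 4 * ((saddleSign i + saddleSign j) * (x i * x j * osc' s)
            + x i * x j * saddle x * osc'' s)| := by congr 1; ring
    _ ≤ 4 + 4 * (2 + 1) := by
        grw [abs_add_le, abs_mul, abs_add_le, hdiag, hoff, h3]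
        norm_num
    _ = 16 := by norm_num

end Hessian

section Laplacian

variable {x : EuclideanSpace ℝ (Fin 2)}

lemma lap_phiFun (hx : x ≠ 0) (hx1 : ‖x‖ ^ 2 < 1) :
    lap phiFun x = 12 * (saddle x * osc' (‖x‖ ^ 2))
      + 4 * (‖x‖ ^ 2 * saddle x * osc'' (‖x‖ ^ 2)) := by
  rw [lap, Fin.sum_univ_two, spd_phiFun hx hx1, spd_phiFun hx hx1]
  simp only [if_true, saddleSign, Matrix.cons_val_zero, Matrix.cons_val_one]
  rw [norm_sq_eq_coord, saddle]
  ring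

lemma abs_lap_phiFun_le (hx : x ≠ 0) (ht : 1 ≤ -log (‖x‖ ^ 2)) :
    |lap phiFun x| ≤ 16 * (-log (‖x‖ ^ 2))⁻¹ := by
  have hs : 0 < ‖x‖ ^ 2 := pow_pos (norm_pos_iff.2 hx) 2
  have h1 := abs_mul_le_of_abs_le (abs_saddle_le x) (abs_mul_osc'_le hs ht)
  have h2 : |‖x‖ ^ 2 * saddle x * osc'' (‖x‖ ^ 2)| ≤ (-log (‖x‖ ^ 2))⁻¹ := by
    refine abs_mul_le_of_abs_le ?_ (abs_sq_mul_osc''_le hs ht)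
    rw [abs_mul, abs_of_pos hs, sq (‖x‖ ^ 2)]
    exact mul_le_mul_of_nonneg_left (abs_saddle_le x) hs.le
  rw [lap_phiFun hx (lt_one_of_one_le_neg_log hs ht)]
  rw [abs_le] at h1 h2 ⊢
  constructor <;> linarith

lemma tendsto_neg_log_norm_sq :
    Tendsto (fun x : EuclideanSpace ℝ (Fin 2) => -log (‖x‖ ^ 2)) (𝓝[≠] 0) atTop := by
  have h := tendsto_neg_atBot_atTop.comp
    (tendsto_log_nhdsGT_zero.comp (tendsto_norm_nhdsNE_zero (E := EuclideanSpace ℝ (Fin 2))))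
  refine (h.const_mul_atTop two_pos).congr fun x => ?_
  simp [log_pow]

lemma tendsto_lap_phiFun : Tendsto (lap phiFun) (𝓝[≠] 0) (𝓝 0) := by
  have ht := tendsto_neg_log_norm_sq
  refine squeeze_zero_norm' ?_ (by simpa only [mul_zero] using ht.inv_tendsto_atTop.const_mul 16)
  filter_upwards [ht.eventually_ge_atTop 1, self_mem_nhdsWithin] with x hxt hx
  exact abs_lap_phiFun_le hx hxt

end Laplacian

lemma abs_phiFun_le (y : EuclideanSpace ℝ (Fin 2)) : |phiFun y| ≤ ‖y‖ ^ 2 := by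
  rw [phiFun_eq, abs_mul]
  simpa using mul_le_mul (abs_saddle_le y) (abs_osc_le _) (abs_nonneg _) (by positivity)

lemma hasFDerivAt_phiFun_zero : HasFDerivAt phiFun (0 : EuclideanSpace ℝ (Fin 2) →L[ℝ] ℝ) 0 :=
  Asymptotics.IsBigO.hasFDerivAt (n := 2)
    (Asymptotics.IsBigO.of_bound 1 (Eventually.of_forall fun y => by simpa using abs_phiFun_le y))
    one_lt_two

lemma phiFun_sqrt_smul_single {s : ℝ} (hs : 0 ≤ s) :
    phiFun (√s • EuclideanSpace.single 0 1) = s * osc s := by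
  simp [phiFun_eq, saddle, sq_sqrt hs, norm_sq_eq_coord]

lemma tendsto_sqrt_smul_single :
    Tendsto (fun s : ℝ => √s • EuclideanSpace.single (0 : Fin 2) (1 : ℝ)) (𝓝[>] 0) (𝓝[≠] 0) := by
  refine tendsto_nhdsWithin_iff.2 ⟨?_, eventually_mem_nhdsWithin.mono fun s hs => ?_⟩
  · have : Continuous fun s : ℝ => √s • EuclideanSpace.single (0 : Fin 2) (1 : ℝ) := by fun_prop
    simpa using (this.tendsto 0).mono_left nhdsWithin_le_nhds
  · simpa using (sqrt_pos.2 hs).ne'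

lemma not_twiceDiffAt_phiFun : ¬ TwiceDiffAt phiFun 0 := by
  rintro ⟨-, -, h⟩
  set e := EuclideanSpace.single (0 : Fin 2) (1 : ℝ)
  set c := fderiv ℝ (fderiv ℝ phiFun) 0 e e
  have hquot : ∀ᶠ s in 𝓝[>] (0 : ℝ), (phiFun (√s • e) - phiFun 0 - fderiv ℝ phiFun 0 (√s • e - 0)
      - 1 / 2 * fderiv ℝ (fderiv ℝ phiFun) 0 (√s • e - 0) (√s • e - 0)) / ‖√s • e - 0‖ ^ 2
      = osc s - c / 2 := by
    filter_upwards [self_mem_nhdsWithin] with s (hs : 0 < s)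
    have h0 : phiFun 0 = 0 := by simp [phiFun]
    simp only [sub_zero, h0, hasFDerivAt_phiFun_zero.fderiv, zero_apply, map_smul,
      smul_apply, smul_eq_mul, phiFun_sqrt_smul_single hs.le, norm_smul, e, PiLp.norm_single,
      norm_one, mul_one, norm_of_nonneg (sqrt_nonneg s), sq_sqrt hs.le, ← mul_assoc,
      mul_self_sqrt hs.le]
    field_simp
    ring
  refine not_tendsto_osc (c / 2) ?_
  have := ((h.comp tendsto_sqrt_smul_single).congr' hquot).add_const (c / 2)
  simpa only [sub_add_cancel, zero_add] using this

theorem stmt4 :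
    (∃ L : ℝ, Tendsto (fun x => lap phiFun x) (𝓝[≠] (0 : EuclideanSpace ℝ (Fin 2))) (𝓝 L)) ∧
    (∃ C : ℝ, ∀ x : EuclideanSpace ℝ (Fin 2), x ≠ 0 → ‖x‖^2 ≤ 1/4 →
      ∀ i j : Fin 2, |spd i j phiFun x| ≤ C) ∧
    ¬ TwiceDiffAt phiFun 0 :=
  ⟨⟨0, tendsto_lap_phiFun⟩,
    ⟨16, fun _ hx hx4 => abs_spd_phiFun_le hx
      (one_le_neg_log_of_le_quarter (pow_pos (norm_pos_iff.2 hx) 2) hx4)⟩,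
    not_twiceDiffAt_phiFun⟩
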